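/- arXiv:1512.03552 — 2 statements merged into one kernel-verified Lean document; each statement's English description precedes it below -/
import Mathlib

section
/- Let A, B, λ be real numbers with 0 < B < 1 < A, and define G(q) = 16 A q³ + 4q²(λA² − 4A − B) + 4q(−λA² + A + B) + λA². Then G has at most one root q in the interval [0, 1/2). -/
/-!
Centred at `q = 1/2` the cubic loses its linear term: with `t = q - 1/2`,
`G = 16A t³ + c t² + B`. For two roots `s, t < 0` of `a t³ + c t² + b`, eliminating `c` gives
`(s - t) (a s² t² - b (s + t)) = 0`, and the second factor is positive because `s + t < 0`.
-/

theorem setOf_neg_and_cubic_eq_zero_subsingleton {a b : ℝ} (ha : 0 ≤ a) (hb : 0 < b) (c : ℝ) :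
    {t : ℝ | t < 0 ∧ a * t ^ 3 + c * t ^ 2 + b = 0}.Subsingleton := by
  rintro s ⟨hs, hs0⟩ t ⟨ht, ht0⟩
  have key : (s - t) * (a * s ^ 2 * t ^ 2 - b * (s + t)) = 0 := by
    linear_combination t ^ 2 * hs0 - s ^ 2 * ht0
  have hfactor : 0 < a * s ^ 2 * t ^ 2 - b * (s + t) := by
    have : 0 ≤ a * s ^ 2 * t ^ 2 := by positivity
    nlinarith
  linarith [(mul_eq_zero.mp key).resolve_right hfactor.ne']

theorem cubic_at_most_one_root_general (A B lam : ℝ) (hB0 : 0 < B) (hA : 1 < A)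
    (G : ℝ → ℝ)
    (hG : ∀ q, G q = 16 * A * q ^ 3 + 4 * q ^ 2 * (lam * A ^ 2 - 4 * A - B)
      + 4 * q * (-(lam * A ^ 2) + A + B) + lam * A ^ 2) :
    ∀ q₁ ∈ Set.Ico (0 : ℝ) (1 / 2), ∀ q₂ ∈ Set.Ico (0 : ℝ) (1 / 2),
      G q₁ = 0 → G q₂ = 0 → q₁ = q₂ := by
  intro q₁ hq₁ q₂ hq₂ h₁ h₂
  have hcentred : ∀ q, G q = 16 * A * (q - 1 / 2) ^ 3
      + (4 * lam * A ^ 2 + 8 * A - 4 * B) * (q - 1 / 2) ^ 2 + B := fun q => by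
    rw [hG]; ring
  have hroots := setOf_neg_and_cubic_eq_zero_subsingleton (a := 16 * A) (by linarith) hB0
    (4 * lam * A ^ 2 + 8 * A - 4 * B)
    ⟨by linarith [hq₁.2], (hcentred q₁).symm.trans h₁⟩
    ⟨by linarith [hq₂.2], (hcentred q₂).symm.trans h₂⟩
  linarith

/-- For `0 < B < 1 < A` and the cubic
`G(q) = 16Aq³ + 4q²(λA² − 4A − B) + 4q(−λA² + A + B) + λA²`,
`G` has at most one root in the interval `[0, 1/2)`. -/
theorem cubic_at_most_one_root (A B lam : ℝ) (hB0 : 0 < B) (hB1 : B < 1) (hA : 1 < A)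
    (G : ℝ → ℝ)
    (hG : ∀ q, G q = 16 * A * q ^ 3 + 4 * q ^ 2 * (lam * A ^ 2 - 4 * A - B)
      + 4 * q * (-(lam * A ^ 2) + A + B) + lam * A ^ 2) :
    ∀ q₁ ∈ Set.Ico (0 : ℝ) (1 / 2), ∀ q₂ ∈ Set.Ico (0 : ℝ) (1 / 2),
      G q₁ = 0 → G q₂ = 0 → q₁ = q₂ :=
  cubic_at_most_one_root_general A B lam hB0 hA G hG
end

section
/- The function (q_1,…,q_d) ↦ B/A, where A = 1 + 2 Σ_{i=1}^d q_i²/(1−2q_i) and B = 1 − 2 Σ_{i=1}^d q_i², defined on the open simplex {q_i > 0, Σ q_i = 1/2, q_i < 1/2}, attains its maximum value 1 − 1/d at the point q_i = 1/(2d) for all i. -/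
/-!
By Cauchy–Schwarz, `∑ qᵢ = 1/2` forces `∑ qᵢ² ≥ 1/(4d)`, so `B ≤ 1 - 1/(2d)`. By Sedrakyan's
inequality with weights `1 - 2qᵢ > 0`, which sum to `d - 1`, `∑ qᵢ²/(1 - 2qᵢ) ≥ 1/(4(d - 1))`,
so `A ≥ 1 + 1/(2(d - 1))`. The ratio of these two bounds is exactly `1 - 1/d`, and both are
equalities at the uniform point.
-/

open Finset

section Simplex

variable {ι : Type*} [Fintype ι] {q : ι → ℝ}

lemma one_div_four_mul_card_le_sum_sq (hq : ∑ i, q i = 1 / 2) :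
    1 / (4 * Fintype.card ι) ≤ ∑ i, q i ^ 2 := by
  have h := sq_sum_le_card_mul_sum_sq (s := univ) (f := q)
  rw [hq, card_univ, mul_comm] at h
  calc 1 / (4 * (Fintype.card ι : ℝ)) = (1 / 2) ^ 2 / Fintype.card ι := by
        rw [show (1 / 2 : ℝ) ^ 2 = 1 / 4 by norm_num, div_div]
    _ ≤ _ := div_le_of_le_mul₀ (by positivity) (by positivity) h

lemma one_div_four_mul_card_sub_one_le_sum_sq_div (hq_lt : ∀ i, q i < 1 / 2)
    (hq : ∑ i, q i = 1 / 2) :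
    1 / (4 * ((Fintype.card ι : ℝ) - 1)) ≤ ∑ i, q i ^ 2 / (1 - 2 * q i) := by
  have h := sq_sum_div_le_sum_sq_div univ q (g := fun i => 1 - 2 * q i)
    fun i _ => by linarith [hq_lt i]
  have hweights : ∑ i, (1 - 2 * q i) = Fintype.card ι - 1 := by
    rw [sum_sub_distrib, ← mul_sum, hq]
    simp
  rw [hq, hweights] at h
  calc 1 / (4 * ((Fintype.card ι : ℝ) - 1)) = (1 / 2) ^ 2 / (Fintype.card ι - 1) := by
        rw [show (1 / 2 : ℝ) ^ 2 = 1 / 4 by norm_num, div_div]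
    _ ≤ _ := h

end Simplex

/-- The drift function `(q₁,…,q_d) ↦ B/A`, with `A = 1 + 2∑ qᵢ²/(1−2qᵢ)` and
`B = 1 − 2∑ qᵢ²`, defined on the open simplex `{qᵢ ∈ (0,1/2), ∑ qᵢ = 1/2}`,
attains its maximum value `1 − 1/d` at `qᵢ = 1/(2d)`. -/
theorem drift_max_at_uniform (d : ℕ) (hd : 2 ≤ d) :
    (∀ q : Fin d → ℝ, (∀ i, 0 < q i ∧ q i < 1 / 2) → (∑ i, q i) = 1 / 2 →
      (1 - 2 * ∑ i, q i ^ 2) / (1 + 2 * ∑ i, q i ^ 2 / (1 - 2 * q i)) ≤ 1 - 1 / d) ∧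
    (1 - 2 * ∑ _i : Fin d, (1 / (2 * d) : ℝ) ^ 2) /
        (1 + 2 * ∑ _i : Fin d, (1 / (2 * d) : ℝ) ^ 2 / (1 - 2 * (1 / (2 * d) : ℝ)))
      = 1 - 1 / d := by
  have hd' : (2 : ℝ) ≤ d := by exact_mod_cast hd
  have hd1 : (0 : ℝ) < d - 1 := by linarith
  have hd2 : (2 * d - 1 : ℝ) ≠ 0 := by linarith
  refine ⟨fun q hq hsum => ?_, ?_⟩
  · have hB := one_div_four_mul_card_le_sum_sq hsum
    have hA := one_div_four_mul_card_sub_one_le_sum_sq_div (fun i => (hq i).2) hsum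
    rw [Fintype.card_fin] at hA hB
    have hA_pos : 0 < 1 + 2 * ∑ i, q i ^ 2 / (1 - 2 * q i) := by
      have : 0 < 1 / (4 * ((d : ℝ) - 1)) := by positivity
      linarith
    rw [div_le_iff₀ hA_pos]
    calc 1 - 2 * ∑ i, q i ^ 2 ≤ 1 - 2 * (1 / (4 * d)) := by linarith
      _ = (1 - 1 / d) * (1 + 2 * (1 / (4 * (d - 1)))) := by field_simp; ring
      _ ≤ _ := by
        gcongr
        rw [sub_nonneg, div_le_one (by linarith)]
        linarith
  · simp only [sum_const, card_univ, Fintype.card_fin, nsmul_eq_mul]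
    field_simp
    ring
end
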